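/- arXiv:2005.11720 — 3 statements merged into one kernel-verified Lean document; each statement's English description precedes it below -/
import Mathlib

section
/- For every regressor g with 𝔼[g(X,S)²] < ∞, one has R(g) − R* ≥ Σ_{s=1}^k π_s · W₂²(μ_s, ν_s(g)). Consequently, for every class 𝒢 of such regressors, inf_{g∈𝒢} R(g) − R* ≥ inf_{g∈𝒢} Σ_{s=1}^k π_s W₂²(μ_s, ν_s(g)). (Theorem 1, lower bound.) -/
open MeasureTheory ProbabilityTheory

/-- Squared 2-Wasserstein distance between measures on ℝ: infimum of ∫|x−y|² dγ over
couplings γ of P and Q. -/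
noncomputable def W2sq (P Q : Measure ℝ) : ℝ :=
  sInf { c : ℝ | ∃ γ : Measure (ℝ × ℝ),
    γ.map Prod.fst = P ∧ γ.map Prod.snd = Q ∧ c = ∫ z, (z.1 - z.2) ^ 2 ∂γ }

/-!
By the Pythagorean identity for the conditional expectation `η(X,S) = 𝔼[Y | X,S]`, the excess
risk `R(g) − R*` equals `𝔼[(η(X,S) − g(X,S))²]`. Splitting this expectation along the fibres of
`S` gives `Σ_s π_s 𝔼[(η(X,S) − g(X,S))² | S = s]`, and under `ℙ(· | S = s)` the pair
`(η(X,S), g(X,S))` is a coupling of `μ_s` and `ν_s(g)`, so each conditional term is at least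
`W₂²(μ_s, ν_s(g))`.
-/

lemma W2sq_nonneg (P Q : Measure ℝ) : 0 ≤ W2sq P Q := by
  refine Real.sInf_nonneg ?_
  rintro c ⟨γ, -, -, rfl⟩
  exact integral_nonneg fun z => sq_nonneg _

lemma W2sq_map_le_integral {Ω : Type*} [MeasurableSpace Ω] (m : Measure Ω) {f g : Ω → ℝ}
    (hf : Measurable f) (hg : Measurable g) :
    W2sq (m.map f) (m.map g) ≤ ∫ ω, (f ω - g ω) ^ 2 ∂m := by
  have hfg : Measurable fun ω => (f ω, g ω) := hf.prodMk hg
  have hcoupling : (∫ ω, (f ω - g ω) ^ 2 ∂m) ∈ { c : ℝ | ∃ γ : Measure (ℝ × ℝ),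
      γ.map Prod.fst = m.map f ∧ γ.map Prod.snd = m.map g ∧
      c = ∫ z, (z.1 - z.2) ^ 2 ∂γ } := by
    refine ⟨m.map fun ω => (f ω, g ω), ?_, ?_, ?_⟩
    · rw [Measure.map_map measurable_fst hfg]
      rfl
    · rw [Measure.map_map measurable_snd hfg]
      rfl
    · rw [integral_map hfg.aemeasurable (by fun_prop)]
  refine csInf_le ⟨0, ?_⟩ hcoupling
  rintro c ⟨γ, -, -, rfl⟩
  exact integral_nonneg fun z => sq_nonneg _

section condExp

variable {α : Type*} {m m₀ : MeasurableSpace α} {μ : Measure α} [IsFiniteMeasure μ]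

lemma integral_mul_sub_condExp_eq_zero (hm : m ≤ m₀) {ψ Y : α → ℝ}
    (hψm : StronglyMeasurable[m] ψ) (hψ : MemLp ψ 2 μ) (hY : MemLp Y 2 μ) :
    ∫ ω, ψ ω * (Y ω - μ[Y|m] ω) ∂μ = 0 := by
  have hψY : Integrable (fun ω => ψ ω * Y ω) μ := hψ.integrable_mul hY
  have hψE : Integrable (fun ω => ψ ω * μ[Y|m] ω) μ :=
    hψ.integrable_mul (hY.condExp one_le_two)
  have hpull : ∫ ω, ψ ω * Y ω ∂μ = ∫ ω, ψ ω * μ[Y|m] ω ∂μ :=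
    calc ∫ ω, ψ ω * Y ω ∂μ = ∫ ω, μ[ψ * Y|m] ω ∂μ := (integral_condExp hm).symm
      _ = ∫ ω, ψ ω * μ[Y|m] ω ∂μ := integral_congr_ae
          (condExp_mul_of_stronglyMeasurable_left hψm hψY (hY.integrable one_le_two))
  simp_rw [mul_sub]
  rw [integral_sub hψY hψE, hpull, sub_self]

lemma integral_sq_sub_eq_integral_sq_sub_condExp_add (hm : m ≤ m₀) {Y G : α → ℝ}
    (hY : MemLp Y 2 μ) (hGm : StronglyMeasurable[m] G) (hG : MemLp G 2 μ) :
    ∫ ω, (Y ω - G ω) ^ 2 ∂μ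
      = ∫ ω, (Y ω - μ[Y|m] ω) ^ 2 ∂μ + ∫ ω, (μ[Y|m] ω - G ω) ^ 2 ∂μ := by
  have hYE : MemLp (fun ω => Y ω - μ[Y|m] ω) 2 μ := hY.sub (hY.condExp one_le_two)
  have hEG : MemLp (fun ω => μ[Y|m] ω - G ω) 2 μ := (hY.condExp one_le_two).sub hG
  have hcross_int : Integrable (fun ω => 2 * ((μ[Y|m] ω - G ω) * (Y ω - μ[Y|m] ω))) μ :=
    (hEG.integrable_mul hYE).const_mul 2
  have hcross : ∫ ω, (μ[Y|m] ω - G ω) * (Y ω - μ[Y|m] ω) ∂μ = 0 :=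
    integral_mul_sub_condExp_eq_zero hm (stronglyMeasurable_condExp.sub hGm) hEG hY
  have hsq : ∀ ω, (Y ω - G ω) ^ 2 = (Y ω - μ[Y|m] ω) ^ 2
      + ((μ[Y|m] ω - G ω) ^ 2 + 2 * ((μ[Y|m] ω - G ω) * (Y ω - μ[Y|m] ω))) :=
    fun ω => by ring
  simp_rw [hsq]
  have hrest_int : Integrable (fun ω => (μ[Y|m] ω - G ω) ^ 2
      + 2 * ((μ[Y|m] ω - G ω) * (Y ω - μ[Y|m] ω))) μ := hEG.integrable_sq.add hcross_int
  rw [integral_add hYE.integrable_sq hrest_int,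
    integral_add hEG.integrable_sq hcross_int,
    integral_const_mul, hcross, mul_zero, add_zero]

end condExp

lemma integral_eq_sum_smul_integral_cond {Ω α E : Type*} [MeasurableSpace Ω] [Fintype α]
    [MeasurableSpace α] [DiscreteMeasurableSpace α] [NormedAddCommGroup E] [NormedSpace ℝ E]
    {μ : Measure Ω} [IsFiniteMeasure μ] {X : Ω → α} (hX : Measurable X) {f : Ω → E}
    (hf : Integrable f μ) :
    ∫ ω, f ω ∂μ = ∑ x, (μ (X ⁻¹' {x})).toReal • ∫ ω, f ω ∂μ[|X ⁻¹' {x}] := by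
  have hsum := sum_meas_smul_cond_fiber hX μ
  rw [← hsum] at hf
  conv_lhs => rw [← hsum]
  rw [integral_finsetSum_measure fun x _ =>
    integrable_finsetSum_measure.1 hf x (Finset.mem_univ x)]
  simp_rw [integral_smul_measure]

lemma sum_mul_W2sq_cond_le_integral {Ω α : Type*} [MeasurableSpace Ω] [Fintype α]
    [MeasurableSpace α] [DiscreteMeasurableSpace α] {μ : Measure Ω} [IsFiniteMeasure μ]
    {X : Ω → α} (hX : Measurable X) {f g : Ω → ℝ} (hf : Measurable f) (hg : Measurable g)
    (hfg : Integrable (fun ω => (f ω - g ω) ^ 2) μ) :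
    ∑ x, (μ (X ⁻¹' {x})).toReal * W2sq ((μ[|X ⁻¹' {x}]).map f) ((μ[|X ⁻¹' {x}]).map g)
      ≤ ∫ ω, (f ω - g ω) ^ 2 ∂μ := by
  rw [integral_eq_sum_smul_integral_cond hX hfg]
  simp_rw [smul_eq_mul]
  gcongr
  exact W2sq_map_le_integral _ hf hg

lemma csInf_image_le_csInf_image {ι α : Type*} [ConditionallyCompleteLattice α] {s : Set ι}
    {f g : ι → α} (hf : BddBelow (f '' s)) (hfg : ∀ i ∈ s, f i ≤ g i) :
    sInf (f '' s) ≤ sInf (g '' s) := by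
  rw [sInf_image', sInf_image']
  exact ciInf_mono (by rwa [← Set.image_eq_range]) fun i => hfg i i.2

theorem fairness_lower_bound_general
    {Ω : Type*} [MeasurableSpace Ω] (Pr : Measure Ω) [IsProbabilityMeasure Pr]
    (d k : ℕ)
    (X : Ω → EuclideanSpace ℝ (Fin d)) (S : Ω → Fin k) (Y : Ω → ℝ)
    (hX : Measurable X) (hS : Measurable S)
    (hY2 : MemLp Y 2 Pr)
    (π : Fin k → ℝ) (hπ : ∀ s, π s = (Pr (S ⁻¹' {s})).toReal)
    -- the Bayes regressor: `η(X,S) = 𝔼[Y | X,S]` a.s.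
    (η : EuclideanSpace ℝ (Fin d) × Fin k → ℝ) (hη : Measurable η)
    (hηBayes : (fun ω => η (X ω, S ω))
      =ᵐ[Pr] MeasureTheory.condExp
        (MeasurableSpace.comap (fun ω => (X ω, S ω)) inferInstance) Pr Y)
    -- risk of a regressor and the Bayes risk
    (R : (EuclideanSpace ℝ (Fin d) × Fin k → ℝ) → ℝ)
    (hR : ∀ g, R g = ∫ ω, (Y ω - g (X ω, S ω)) ^ 2 ∂Pr)
    (Rstar : ℝ) (hRstar : Rstar = ∫ ω, (Y ω - η (X ω, S ω)) ^ 2 ∂Pr)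
    -- conditional distributions given `S = s`
    (μ : Fin k → Measure ℝ)
    (hμ : ∀ s, μ s = (Pr[|S ⁻¹' {s}]).map (fun ω => η (X ω, S ω)))
    (ν : (EuclideanSpace ℝ (Fin d) × Fin k → ℝ) → Fin k → Measure ℝ)
    (hν : ∀ g s, ν g s = (Pr[|S ⁻¹' {s}]).map (fun ω => g (X ω, S ω))) :
    (∀ g : EuclideanSpace ℝ (Fin d) × Fin k → ℝ,
        Measurable g → MemLp (fun ω => g (X ω, S ω)) 2 Pr →
        R g - Rstar ≥ ∑ s, π s * W2sq (μ s) (ν g s)) ∧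
    (∀ 𝒢 : Set (EuclideanSpace ℝ (Fin d) × Fin k → ℝ),
        (∀ g ∈ 𝒢, Measurable g ∧ MemLp (fun ω => g (X ω, S ω)) 2 Pr) →
        sInf ((fun g => R g - Rstar) '' 𝒢)
          ≥ sInf ((fun g => ∑ s, π s * W2sq (μ s) (ν g s)) '' 𝒢)) := by
  have hφ : Measurable fun ω => (X ω, S ω) := hX.prodMk hS
  have hm := hφ.comap_le
  have hφm : Measurable[MeasurableSpace.comap (fun ω => (X ω, S ω)) inferInstance]
      (fun ω => (X ω, S ω)) := comap_measurable _
  have hbayes : ∀ f : Ω → ℝ → ℝ, ∫ ω, f ω (η (X ω, S ω)) ∂Pr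
      = ∫ ω, f ω (Pr[Y|MeasurableSpace.comap (fun ω => (X ω, S ω)) inferInstance] ω) ∂Pr :=
    fun f => integral_congr_ae (hηBayes.mono fun ω hω => congrArg (f ω) hω)
  have lower : ∀ g : EuclideanSpace ℝ (Fin d) × Fin k → ℝ,
      Measurable g → MemLp (fun ω => g (X ω, S ω)) 2 Pr →
      R g - Rstar ≥ ∑ s, π s * W2sq (μ s) (ν g s) := by
    intro g hg hg2
    have hexcess : R g - Rstar = ∫ ω, (η (X ω, S ω) - g (X ω, S ω)) ^ 2 ∂Pr := by
      rw [hR, hRstar, hbayes fun ω e => (Y ω - e) ^ 2, hbayes fun ω e => (e - g (X ω, S ω)) ^ 2,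
        integral_sq_sub_eq_integral_sq_sub_condExp_add (G := fun ω => g (X ω, S ω)) hm hY2
          (hg.comp hφm).stronglyMeasurable hg2,
        add_sub_cancel_left]
    simp_rw [hπ, hμ, hν, hexcess]
    exact sum_mul_W2sq_cond_le_integral hS (hη.comp hφ) (hg.comp hφ)
      (((hY2.condExp one_le_two).ae_eq hηBayes.symm).sub hg2).integrable_sq
  refine ⟨lower, fun 𝒢 h𝒢 => csInf_image_le_csInf_image ⟨0, ?_⟩
    fun g hg => lower g (h𝒢 g hg).1 (h𝒢 g hg).2⟩
  rintro _ ⟨g, -, rfl⟩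
  exact Finset.sum_nonneg fun s _ => mul_nonneg (hπ s ▸ by positivity) (W2sq_nonneg _ _)

/-- **Theorem 1 (lower bound).**
For every regressor `g` with `𝔼[g(X,S)²] < ∞`,
`R(g) − R* ≥ Σ_s π_s W₂²(μ_s, ν_s(g))`, and consequently for every class `𝒢` of such
regressors, `inf_{g∈𝒢} (R(g) − R*) ≥ inf_{g∈𝒢} Σ_s π_s W₂²(μ_s, ν_s(g))`. -/
theorem fairness_lower_bound
    {Ω : Type*} [MeasurableSpace Ω] (Pr : Measure Ω) [IsProbabilityMeasure Pr]
    (d k : ℕ) (hk : 0 < k)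
    (X : Ω → EuclideanSpace ℝ (Fin d)) (S : Ω → Fin k) (Y : Ω → ℝ)
    (hX : Measurable X) (hS : Measurable S) (hY : Measurable Y)
    (hY2 : MemLp Y 2 Pr)
    (π : Fin k → ℝ) (hπ : ∀ s, π s = (Pr (S ⁻¹' {s})).toReal) (hπpos : ∀ s, 0 < π s)
    -- the Bayes regressor: `η(X,S) = 𝔼[Y | X,S]` a.s.
    (η : EuclideanSpace ℝ (Fin d) × Fin k → ℝ) (hη : Measurable η)
    (hηBayes : (fun ω => η (X ω, S ω))
      =ᵐ[Pr] MeasureTheory.condExp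
        (MeasurableSpace.comap (fun ω => (X ω, S ω)) inferInstance) Pr Y)
    -- risk of a regressor and the Bayes risk
    (R : (EuclideanSpace ℝ (Fin d) × Fin k → ℝ) → ℝ)
    (hR : ∀ g, R g = ∫ ω, (Y ω - g (X ω, S ω)) ^ 2 ∂Pr)
    (Rstar : ℝ) (hRstar : Rstar = ∫ ω, (Y ω - η (X ω, S ω)) ^ 2 ∂Pr)
    -- conditional distributions given `S = s`
    (μ : Fin k → Measure ℝ)
    (hμ : ∀ s, μ s = (Pr[|S ⁻¹' {s}]).map (fun ω => η (X ω, S ω)))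
    (ν : (EuclideanSpace ℝ (Fin d) × Fin k → ℝ) → Fin k → Measure ℝ)
    (hν : ∀ g s, ν g s = (Pr[|S ⁻¹' {s}]).map (fun ω => g (X ω, S ω))) :
    (∀ g : EuclideanSpace ℝ (Fin d) × Fin k → ℝ,
        Measurable g → MemLp (fun ω => g (X ω, S ω)) 2 Pr →
        R g - Rstar ≥ ∑ s, π s * W2sq (μ s) (ν g s)) ∧
    (∀ 𝒢 : Set (EuclideanSpace ℝ (Fin d) × Fin k → ℝ),
        (∀ g ∈ 𝒢, Measurable g ∧ MemLp (fun ω => g (X ω, S ω)) 2 Pr) →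
        sInf ((fun g => R g - Rstar) '' 𝒢)
          ≥ sInf ((fun g => ∑ s, π s * W2sq (μ s) (ν g s)) '' 𝒢)) :=
  fairness_lower_bound_general Pr d k X S Y hX hS hY2 π hπ η hη hηBayes R hR Rstar hRstar μ hμ ν hν
end

section
/- Let μ_1,…,μ_k be probability measures on ℝ with finite second moments and let π_1,…,π_k > 0 with Σ_{s=1}^k π_s = 1, and let ν̄ be the pushforward of Unif(0,1) under u ↦ Σ_{s=1}^k π_s F_{μ_s}⁻¹(u). Then the barycenter value admits the explicit expression Σ_{s=1}^k π_s W₂²(μ_s, ν̄) = Σ_{s=1}^k π_s ∫₀¹ |F_{μ_s}⁻¹(u) − Σ_{t=1}^k π_t F_{μ_t}⁻¹(u)|² du. -/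
/-!
The map `u ↦ F_μ⁻¹(u)` pushes `Unif(0,1)` forward to `μ`, and `ν̄` is the image of `Unif(0,1)`
under the nondecreasing map `∑ π_t F_{μ_t}⁻¹`. So everything reduces to the one-dimensional fact
that for `f, g` nondecreasing on `(0,1)` the comonotone coupling `(f, g)_# Unif(0,1)` is optimal:
`W₂²(f_# U, g_# U) = ∫ (f - g)²`. Among couplings with fixed marginals only `∫ x y` varies, and
Hoeffding's identity `x y = ∫∫ (1{t ≤ x} - 1{t ≤ 0}) (1{s ≤ y} - 1{s ≤ 0}) dt ds` turns `∫ x y dγ`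
into the integral of `γ {x ≥ t, y ≥ s}` plus marginal terms. The comonotone coupling attains the
Fréchet upper bound `min (P [t, ∞)) (Q [s, ∞))` of that orthant probability for every `t, s`.
-/

open MeasureTheory ProbabilityTheory

/-- CDF of a measure on ℝ. -/
noncomputable def cdf' (μ : Measure ℝ) (x : ℝ) : ℝ := (μ (Set.Iic x)).toReal

/-- Quantile function of a measure on ℝ: `F_μ⁻¹(u) = inf {x : F_μ(x) ≥ u}`. -/
noncomputable def quantile' (μ : Measure ℝ) (u : ℝ) : ℝ := sInf { x : ℝ | u ≤ cdf' μ x }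

/-- Uniform distribution on (0,1): Lebesgue measure restricted to (0,1). -/
noncomputable def unif01 : Measure ℝ := volume.restrict (Set.Ioo 0 1)

open Set

instance : IsProbabilityMeasure unif01 := ⟨by simp [unif01]⟩

lemma unif01_Iic {c : ℝ} (hc : c ≤ 1) : unif01 (Iic c) = ENNReal.ofReal c := by
  rw [unif01, Measure.restrict_congr_set Ioo_ae_eq_Ioc, Measure.restrict_apply measurableSet_Iic,
    inter_comm, Ioc_inter_Iic, inf_eq_right.2 hc, Real.volume_Ioc, sub_zero]

section Quantile

variable {μ : Measure ℝ} [IsProbabilityMeasure μ] {u x : ℝ}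

lemma cdf'_eq_cdf : cdf' μ = cdf μ := by
  funext x
  rw [cdf_eq_real, measureReal_def, cdf']

lemma quantile'_le_iff (hu : u ∈ Ioo 0 1) : quantile' μ u ≤ x ↔ u ≤ cdf' μ x := by
  rw [quantile', cdf'_eq_cdf]
  obtain ⟨y, hy⟩ := ((tendsto_cdf_atBot μ).eventually (eventually_lt_nhds hu.1)).exists
  have hbdd : BddBelow {x | u ≤ cdf μ x} := ⟨y, fun z hz =>
    le_of_not_gt fun hzy => (hz.trans (monotone_cdf μ hzy.le)).not_gt hy⟩
  have hne : {x | u ≤ cdf μ x}.Nonempty :=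
    ((tendsto_cdf_atTop μ).eventually (eventually_ge_nhds hu.2)).exists
  refine ⟨fun h => ?_, fun h => csInf_le hbdd h⟩
  refine ge_of_tendsto ((cdf μ).right_continuous x |>.mono Ioi_subset_Ici_self)
    (eventually_nhdsWithin_of_forall fun y hy => ?_)
  obtain ⟨z, hz, hzy⟩ := exists_lt_of_csInf_lt hne (h.trans_lt hy)
  exact hz.trans (monotone_cdf μ hzy.le)

lemma quantile'_monotoneOn : MonotoneOn (quantile' μ) (Ioo 0 1) := fun _ hu _ hv huv =>
  (quantile'_le_iff hu).2 (huv.trans ((quantile'_le_iff hv).1 le_rfl))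

lemma aemeasurable_quantile' : AEMeasurable (quantile' μ) unif01 :=
  aemeasurable_restrict_of_monotoneOn measurableSet_Ioo quantile'_monotoneOn

lemma map_quantile' : unif01.map (quantile' μ) = μ := by
  refine Measure.ext_of_Iic _ _ fun x => ?_
  have hcdf : cdf' μ x ≤ 1 := by
    rw [cdf'_eq_cdf]; exact cdf_le_one μ x
  rw [Measure.map_apply_of_aemeasurable aemeasurable_quantile' measurableSet_Iic, ← ofReal_cdf,
    ← cdf'_eq_cdf, ← unif01_Iic hcdf, unif01, Measure.restrict_apply' measurableSet_Ioo,
    Measure.restrict_apply' measurableSet_Ioo]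
  exact congrArg volume (Set.ext fun u => and_congr_left quantile'_le_iff)

lemma memLp_quantile' (h : MemLp id 2 μ) : MemLp (quantile' μ) 2 unif01 := by
  rw [← map_quantile' (μ := μ)] at h
  exact (memLp_map_measure_iff aestronglyMeasurable_id aemeasurable_quantile').1 h

end Quantile

def IsComonotone (Γ : Measure (ℝ × ℝ)) : Prop :=
  ∀ t s : ℝ, Γ ({z | t ≤ z.1} ∩ {z | s ≤ z.2}) = min (Γ {z | t ≤ z.1}) (Γ {z | s ≤ z.2})

lemma MonotoneOn.preimage_Ici_inter_subset_or {α β γ : Type*} [LinearOrder α] [Preorder β]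
    [Preorder γ] {I : Set α} {f : α → β} {g : α → γ} (hf : MonotoneOn f I)
    (hg : MonotoneOn g I) (t : β) (s : γ) :
    f ⁻¹' Ici t ∩ I ⊆ g ⁻¹' Ici s ∨ g ⁻¹' Ici s ∩ I ⊆ f ⁻¹' Ici t := by
  by_contra! h
  obtain ⟨x, ⟨hfx, hx⟩, hgx⟩ := not_subset.1 h.1
  obtain ⟨y, ⟨hgy, hy⟩, hfy⟩ := not_subset.1 h.2
  rcases le_total x y with hxy | hyx
  · exact hfy (hfx.trans (hf hx hy hxy))
  · exact hgx (hgy.trans (hg hy hx hyx))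

lemma MeasureTheory.Measure.restrict_inter_eq_min_of_subset {α : Type*} [MeasurableSpace α]
    {ν : Measure α} {I X Y : Set α} (hI : MeasurableSet I) (h : X ∩ I ⊆ Y) :
    ν.restrict I (X ∩ Y) = min (ν.restrict I X) (ν.restrict I Y) := by
  rw [Measure.restrict_apply' hI, Measure.restrict_apply' hI, Measure.restrict_apply' hI,
    inter_right_comm, inter_eq_left.2 h]
  exact (min_eq_left (measure_mono (subset_inter h inter_subset_right))).symm

lemma isComonotone_map_prodMk {f g : ℝ → ℝ} (hf : MonotoneOn f (Ioo 0 1))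
    (hg : MonotoneOn g (Ioo 0 1)) (hfg : AEMeasurable (fun u => (f u, g u)) unif01) :
    IsComonotone (unif01.map fun u => (f u, g u)) := by
  intro t s
  have hfst : MeasurableSet {z : ℝ × ℝ | t ≤ z.1} :=
    measurableSet_le measurable_const measurable_fst
  have hsnd : MeasurableSet {z : ℝ × ℝ | s ≤ z.2} :=
    measurableSet_le measurable_const measurable_snd
  rw [Measure.map_apply_of_aemeasurable hfg (hfst.inter hsnd),
    Measure.map_apply_of_aemeasurable hfg hfst, Measure.map_apply_of_aemeasurable hfg hsnd]
  rcases hf.preimage_Ici_inter_subset_or hg t s with h | h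
  · exact Measure.restrict_inter_eq_min_of_subset measurableSet_Ioo h
  · rw [preimage_inter, inter_comm, min_comm]
    exact Measure.restrict_inter_eq_min_of_subset measurableSet_Ioo h

noncomputable def layer (t x : ℝ) : ℝ := (if t ≤ x then 1 else 0) - if t ≤ 0 then 1 else 0

lemma layer_eq_indicator (x : ℝ) :
    (layer · x) = (Ioc 0 x).indicator 1 - (Ioc x 0).indicator 1 := by
  funext t
  simp only [layer, Pi.sub_apply, indicator_apply, mem_Ioc, Pi.one_apply]
  split_ifs <;> grind

lemma abs_layer_eq_indicator (x : ℝ) :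
    (|layer · x|) = (Ioc 0 x).indicator 1 + (Ioc x 0).indicator 1 := by
  funext t
  simp only [layer, Pi.add_apply, indicator_apply, mem_Ioc, Pi.one_apply]
  split_ifs <;> grind

lemma integrable_indicator_Ioc_one (a b : ℝ) : Integrable ((Ioc a b).indicator (1 : ℝ → ℝ)) :=
  (integrable_indicator_iff measurableSet_Ioc).2 (integrableOn_const (by simp))

lemma integrable_layer (x : ℝ) : Integrable (layer · x) := by
  rw [layer_eq_indicator]
  exact (integrable_indicator_Ioc_one 0 x).sub (integrable_indicator_Ioc_one x 0)

lemma integral_layer (x : ℝ) : ∫ t, layer t x = x := by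
  rw [layer_eq_indicator, integral_sub' (integrable_indicator_Ioc_one 0 x)
    (integrable_indicator_Ioc_one x 0), integral_indicator_one measurableSet_Ioc,
    integral_indicator_one measurableSet_Ioc, Real.volume_real_Ioc, Real.volume_real_Ioc,
    sub_zero, zero_sub, max_zero_sub_max_neg_zero_eq_self]

lemma integral_abs_layer (x : ℝ) : ∫ t, |layer t x| = |x| := by
  rw [abs_layer_eq_indicator, integral_add' (integrable_indicator_Ioc_one 0 x)
    (integrable_indicator_Ioc_one x 0), integral_indicator_one measurableSet_Ioc,
    integral_indicator_one measurableSet_Ioc, Real.volume_real_Ioc, Real.volume_real_Ioc,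
    sub_zero, zero_sub, max_zero_add_max_neg_zero_eq_abs_self]

lemma measurable_layer : Measurable fun q : ℝ × ℝ => layer q.1 q.2 := by
  unfold layer
  exact (Measurable.ite (measurableSet_le measurable_fst measurable_snd) measurable_const
      measurable_const).sub
    (Measurable.ite (measurableSet_le measurable_fst measurable_const) measurable_const
      measurable_const)

lemma mul_eq_integral_layer_mul_layer (x y : ℝ) :
    x * y = ∫ p : ℝ × ℝ, layer p.1 x * layer p.2 y := by
  rw [Measure.volume_eq_prod, integral_prod_mul (layer · x) (layer · y), integral_layer,
    integral_layer]

section Coupling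

variable {γ : Measure (ℝ × ℝ)}

lemma integrable_layer_mul_layer (h1 : MemLp Prod.fst 2 γ) (h2 : MemLp Prod.snd 2 γ) :
    Integrable (fun q : (ℝ × ℝ) × (ℝ × ℝ) => layer q.2.1 q.1.1 * layer q.2.2 q.1.2)
      (γ.prod volume) := by
  have hmeas : Measurable fun q : (ℝ × ℝ) × (ℝ × ℝ) => layer q.2.1 q.1.1 * layer q.2.2 q.1.2 :=
    (measurable_layer.comp (measurable_snd.fst.prodMk measurable_fst.fst)).mul
      (measurable_layer.comp (measurable_snd.snd.prodMk measurable_fst.snd))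
  refine (integrable_prod_iff hmeas.aestronglyMeasurable).2 ⟨ae_of_all _ fun z => ?_, ?_⟩
  · rw [Measure.volume_eq_prod]
    exact (integrable_layer z.1).mul_prod (integrable_layer z.2)
  · have hnorm (z : ℝ × ℝ) : ∫ p : ℝ × ℝ, ‖layer p.1 z.1 * layer p.2 z.2‖ = ‖z.1 * z.2‖ := by
      simp only [norm_mul, Real.norm_eq_abs]
      rw [Measure.volume_eq_prod, integral_prod_mul (|layer · z.1|) (|layer · z.2|),
        integral_abs_layer, integral_abs_layer]
    simp only [hnorm]
    exact (h1.integrable_mul h2).norm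

lemma integral_fst_mul_snd_eq_integral_layer [SFinite γ] (h1 : MemLp Prod.fst 2 γ)
    (h2 : MemLp Prod.snd 2 γ) :
    ∫ z, z.1 * z.2 ∂γ = ∫ p : ℝ × ℝ, ∫ z, layer p.1 z.1 * layer p.2 z.2 ∂γ :=
  (integral_congr_ae (ae_of_all _ fun z : ℝ × ℝ => mul_eq_integral_layer_mul_layer z.1 z.2)).trans
    (integral_integral_swap (integrable_layer_mul_layer h1 h2))

end Coupling

lemma integral_indicator_sub_mul_indicator_sub {α : Type*} [MeasurableSpace α] (ν : Measure α)
    [IsProbabilityMeasure ν] {A B : Set α} (hA : MeasurableSet A) (hB : MeasurableSet B)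
    (a b : ℝ) :
    ∫ x, (A.indicator 1 x - a) * (B.indicator 1 x - b) ∂ν
      = ν.real (A ∩ B) - b * ν.real A - a * ν.real B + a * b := by
  have hind {S : Set α} (hS : MeasurableSet S) :
      Integrable (fun x => S.indicator (1 : α → ℝ) x) ν :=
    (integrable_const 1).indicator hS
  have hexp (x : α) : (A.indicator 1 x - a) * (B.indicator 1 x - b)
      = (A ∩ B).indicator (1 : α → ℝ) x - b * A.indicator 1 x - a * B.indicator 1 x + a * b := by
    rw [inter_indicator_one, Pi.mul_apply]
    ring
  have h2 : Integrable (fun x => (A ∩ B).indicator (1 : α → ℝ) x - b * A.indicator 1 x) ν :=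
    (hind (hA.inter hB)).sub ((hind hA).const_mul b)
  have h3 : Integrable (fun x =>
      (A ∩ B).indicator (1 : α → ℝ) x - b * A.indicator 1 x - a * B.indicator 1 x) ν :=
    h2.sub ((hind hB).const_mul a)
  simp only [hexp]
  rw [integral_add h3 (integrable_const _), integral_sub h2 ((hind hB).const_mul a),
    integral_sub (hind (hA.inter hB)) ((hind hA).const_mul b), integral_const_mul,
    integral_const_mul, integral_indicator_one (hA.inter hB), integral_indicator_one hA,
    integral_indicator_one hB, integral_const, probReal_univ, one_smul]

lemma measure_preimage_eq_of_map_eq {α β : Type*} [MeasurableSpace α] [MeasurableSpace β]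
    {γ Γ : Measure α} {f : α → β} (hf : Measurable f) (h : γ.map f = Γ.map f) {S : Set β}
    (hS : MeasurableSet S) : γ (f ⁻¹' S) = Γ (f ⁻¹' S) := by
  rw [← Measure.map_apply hf hS, h, Measure.map_apply hf hS]

lemma MeasureTheory.MemLp.of_map_eq {α : Type*} [MeasurableSpace α] {ν ν' : Measure α}
    {f : α → ℝ} {p : ENNReal} (hf : Measurable f) (h : ν.map f = ν'.map f) (hν : MemLp f p ν) :
    MemLp f p ν' :=
  (memLp_map_measure_iff aestronglyMeasurable_id hf.aemeasurable).1
    (h ▸ (memLp_map_measure_iff aestronglyMeasurable_id hf.aemeasurable).2 hν)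

lemma integral_sq_eq_of_map_eq {α : Type*} [MeasurableSpace α] {ν ν' : Measure α} {f : α → ℝ}
    (hf : Measurable f) (h : ν.map f = ν'.map f) : ∫ x, f x ^ 2 ∂ν = ∫ x, f x ^ 2 ∂ν' := by
  have hsq : AEStronglyMeasurable (fun x : ℝ => x ^ 2) (ν.map f) :=
    (continuous_pow 2).aestronglyMeasurable
  rw [← integral_map hf.aemeasurable hsq, h, integral_map hf.aemeasurable (h ▸ hsq)]

lemma integral_sub_sq_eq {ν : Measure (ℝ × ℝ)} (h1 : MemLp Prod.fst 2 ν)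
    (h2 : MemLp Prod.snd 2 ν) :
    ∫ z, (z.1 - z.2) ^ 2 ∂ν = ∫ z, z.1 ^ 2 ∂ν + ∫ z, z.2 ^ 2 ∂ν - 2 * ∫ z, z.1 * z.2 ∂ν := by
  have hexp (z : ℝ × ℝ) : (z.1 - z.2) ^ 2 = z.1 ^ 2 + z.2 ^ 2 - 2 * (z.1 * z.2) := by ring
  simp only [hexp]
  rw [integral_sub, integral_add h1.integrable_sq h2.integrable_sq, integral_const_mul]
  · exact h1.integrable_sq.add h2.integrable_sq
  · exact (h1.integrable_mul h2).const_mul 2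

section Comonotone

variable {γ Γ : Measure (ℝ × ℝ)} [IsProbabilityMeasure γ] [IsProbabilityMeasure Γ]

lemma integral_layer_mul_layer_le_of_isComonotone (h1 : γ.map Prod.fst = Γ.map Prod.fst)
    (h2 : γ.map Prod.snd = Γ.map Prod.snd) (hΓ : IsComonotone Γ) (t s : ℝ) :
    ∫ z, layer t z.1 * layer s z.2 ∂γ ≤ ∫ z, layer t z.1 * layer s z.2 ∂Γ := by
  set A := {z : ℝ × ℝ | t ≤ z.1}
  set B := {z : ℝ × ℝ | s ≤ z.2}
  have hA : γ A = Γ A := measure_preimage_eq_of_map_eq measurable_fst h1 measurableSet_Ici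
  have hB : γ B = Γ B := measure_preimage_eq_of_map_eq measurable_snd h2 measurableSet_Ici
  have hAB : γ.real (A ∩ B) ≤ Γ.real (A ∩ B) := by
    refine ENNReal.toReal_mono (measure_ne_top _ _) ?_
    rw [hΓ, ← hA, ← hB]
    exact le_min (measure_mono inter_subset_left) (measure_mono inter_subset_right)
  have hlayer (ν : Measure (ℝ × ℝ)) : ∫ z, layer t z.1 * layer s z.2 ∂ν
      = ∫ z, (A.indicator 1 z - if t ≤ 0 then 1 else 0)
          * (B.indicator 1 z - if s ≤ 0 then 1 else 0) ∂ν := by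
    simp only [layer, A, B, indicator_apply, mem_ofPred_eq, Pi.one_apply]
  rw [hlayer, hlayer, integral_indicator_sub_mul_indicator_sub γ
    (measurableSet_le measurable_const measurable_fst)
    (measurableSet_le measurable_const measurable_snd),
    integral_indicator_sub_mul_indicator_sub Γ (measurableSet_le measurable_const measurable_fst)
    (measurableSet_le measurable_const measurable_snd), measureReal_def γ A, measureReal_def γ B,
    hA, hB, ← measureReal_def, ← measureReal_def]
  linarith

theorem integral_fst_mul_snd_le_of_isComonotone (h1 : γ.map Prod.fst = Γ.map Prod.fst)
    (h2 : γ.map Prod.snd = Γ.map Prod.snd) (hγ1 : MemLp Prod.fst 2 γ) (hγ2 : MemLp Prod.snd 2 γ)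
    (hΓ1 : MemLp Prod.fst 2 Γ) (hΓ2 : MemLp Prod.snd 2 Γ) (hΓ : IsComonotone Γ) :
    ∫ z, z.1 * z.2 ∂γ ≤ ∫ z, z.1 * z.2 ∂Γ := by
  rw [integral_fst_mul_snd_eq_integral_layer hγ1 hγ2,
    integral_fst_mul_snd_eq_integral_layer hΓ1 hΓ2]
  exact integral_mono (integrable_layer_mul_layer hγ1 hγ2).integral_prod_right
    (integrable_layer_mul_layer hΓ1 hΓ2).integral_prod_right
    fun p => integral_layer_mul_layer_le_of_isComonotone h1 h2 hΓ p.1 p.2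

theorem integral_sub_sq_le_of_isComonotone (h1 : γ.map Prod.fst = Γ.map Prod.fst)
    (h2 : γ.map Prod.snd = Γ.map Prod.snd) (hΓ1 : MemLp Prod.fst 2 Γ) (hΓ2 : MemLp Prod.snd 2 Γ)
    (hΓ : IsComonotone Γ) :
    ∫ z, (z.1 - z.2) ^ 2 ∂Γ ≤ ∫ z, (z.1 - z.2) ^ 2 ∂γ := by
  have hγ1 := hΓ1.of_map_eq measurable_fst h1.symm
  have hγ2 := hΓ2.of_map_eq measurable_snd h2.symm
  rw [integral_sub_sq_eq hγ1 hγ2, integral_sub_sq_eq hΓ1 hΓ2,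
    integral_sq_eq_of_map_eq measurable_fst h1, integral_sq_eq_of_map_eq measurable_snd h2]
  linarith [integral_fst_mul_snd_le_of_isComonotone h1 h2 hγ1 hγ2 hΓ1 hΓ2 hΓ]

end Comonotone

theorem W2sq_map_eq_integral_of_monotoneOn {f g : ℝ → ℝ} (hfm : MonotoneOn f (Ioo 0 1))
    (hgm : MonotoneOn g (Ioo 0 1)) (hf : MemLp f 2 unif01) (hg : MemLp g 2 unif01) :
    W2sq (unif01.map f) (unif01.map g) = ∫ u, (f u - g u) ^ 2 ∂unif01 := by
  have hfg : AEMeasurable (fun u => (f u, g u)) unif01 := hf.aemeasurable.prodMk hg.aemeasurable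
  set Γ := unif01.map fun u => (f u, g u)
  have : IsProbabilityMeasure Γ := Measure.isProbabilityMeasure_map hfg
  have hΓ1 : Γ.map Prod.fst = unif01.map f := Measure.fst_map_prodMk₀ hg.aemeasurable
  have hΓ2 : Γ.map Prod.snd = unif01.map g := Measure.snd_map_prodMk₀ hf.aemeasurable
  have hcost : ∫ z, (z.1 - z.2) ^ 2 ∂Γ = ∫ u, (f u - g u) ^ 2 ∂unif01 :=
    integral_map hfg
      (by fun_prop : Continuous fun z : ℝ × ℝ => (z.1 - z.2) ^ 2).aestronglyMeasurable
  refine IsLeast.csInf_eq ⟨⟨Γ, hΓ1, hΓ2, hcost.symm⟩, ?_⟩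
  rintro _ ⟨γ, hγ1, hγ2, rfl⟩
  have : IsProbabilityMeasure (γ.map Prod.fst) :=
    hγ1 ▸ Measure.isProbabilityMeasure_map hf.aemeasurable
  have := Measure.isProbabilityMeasure_of_map (μ := γ) Prod.fst
  rw [← hcost]
  exact integral_sub_sq_le_of_isComonotone (hγ1.trans hΓ1.symm) (hγ2.trans hΓ2.symm)
    ((memLp_map_measure_iff measurable_fst.aestronglyMeasurable hfg).2 hf)
    ((memLp_map_measure_iff measurable_snd.aestronglyMeasurable hfg).2 hg)
    (isComonotone_map_prodMk hfm hgm hfg)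

theorem W2sq_eq_integral_quantile' {P : Measure ℝ} [IsProbabilityMeasure P] (hP : MemLp id 2 P)
    {g : ℝ → ℝ} (hgm : MonotoneOn g (Ioo 0 1)) (hg : MemLp g 2 unif01) :
    W2sq P (unif01.map g) = ∫ u, (quantile' P u - g u) ^ 2 ∂unif01 := by
  simpa only [map_quantile'] using
    W2sq_map_eq_integral_of_monotoneOn quantile'_monotoneOn hgm (memLp_quantile' hP) hg

theorem barycenter_value_explicit_general
    (k : ℕ)
    (μ : Fin k → Measure ℝ) (hμ : ∀ s, IsProbabilityMeasure (μ s))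
    (hμ2 : ∀ s, MemLp id 2 (μ s))
    (π : Fin k → ℝ) (hπpos : ∀ s, 0 < π s)
    (νbar : Measure ℝ)
    (hνbar : νbar = unif01.map (fun u => ∑ s, π s * quantile' (μ s) u)) :
    ∑ s, π s * W2sq (μ s) νbar
      = ∑ s, π s * ∫ u, (quantile' (μ s) u - ∑ t, π t * quantile' (μ t) u) ^ 2 ∂unif01 := by
  have hmono : MonotoneOn (fun u => ∑ t, π t * quantile' (μ t) u) (Ioo 0 1) :=
    fun u hu v hv huv => Finset.sum_le_sum fun t _ =>
      have := hμ t
      mul_le_mul_of_nonneg_left (quantile'_monotoneOn hu hv huv) (hπpos t).le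
  have hL2 : MemLp (fun u => ∑ t, π t * quantile' (μ t) u) 2 unif01 :=
    memLp_finsetSum _ fun t _ =>
      have := hμ t
      (memLp_quantile' (hμ2 t)).const_mul (π t)
  subst hνbar
  refine Finset.sum_congr rfl fun s _ => ?_
  have := hμ s
  rw [W2sq_eq_integral_quantile' (hμ2 s) hmono hL2]

/-- **Explicit barycenter value.** For the quantile-average barycenter `ν̄`,
`Σ_s π_s W₂²(μ_s, ν̄) = Σ_s π_s ∫₀¹ |F_{μ_s}⁻¹(u) − Σ_t π_t F_{μ_t}⁻¹(u)|² du`. -/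
theorem barycenter_value_explicit
    (k : ℕ) (hk : 0 < k)
    (μ : Fin k → Measure ℝ) (hμ : ∀ s, IsProbabilityMeasure (μ s))
    (hμ2 : ∀ s, MemLp id 2 (μ s))
    (π : Fin k → ℝ) (hπpos : ∀ s, 0 < π s) (hπsum : ∑ s, π s = 1)
    (νbar : Measure ℝ)
    (hνbar : νbar = unif01.map (fun u => ∑ s, π s * quantile' (μ s) u)) :
    ∑ s, π s * W2sq (μ s) νbar
      = ∑ s, π s * ∫ u, (quantile' (μ s) u - ∑ t, π t * quantile' (μ t) u) ^ 2 ∂unif01 :=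
  barycenter_value_explicit_general k μ hμ hμ2 π hπpos νbar hνbar
end

section
/- Let (X,S) and (X',S') be random variables on a common probability space with values in ℝ^d × {1,…,k} and 𝔼[|X − X'|²] < ∞. Let η, η̂ : ℝ^d × {1,…,k} → ℝ be measurable functions such that 𝔼[η(X,S)²] < ∞, |η̂(x,s)| ≤ M for all (x,s), and x ↦ η̂(x,s) is L-Lipschitz for every s ∈ {1,…,k}. Then W₂²(law of η(X,S), law of η̂(X',S')) ≤ 2 𝔼[|η(X,S) − η̂(X,S)|²] + 2L² 𝔼[|X − X'|²] + 8M² ℙ(S ≠ S'). (The key perturbation inequality in the proof of Theorem 3.) -/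
/-!
Couple the two laws through the pair `(η(X,S), η̂(X',S'))`. Pointwise,
`(η(X,S) - η̂(X',S'))² ≤ 2 (η(X,S) - η̂(X,S))² + 2 (η̂(X,S) - η̂(X',S'))²`, and the last square is
at most `L² |X - X'|²` where `S = S'` (Lipschitz in `x`) and at most `(2M)²` where `S ≠ S'`.
-/

open MeasureTheory ProbabilityTheory

theorem W2sq_map_le_integral_sq_sub {Ω : Type*} [MeasurableSpace Ω] {μ : Measure Ω}
    {f h : Ω → ℝ} (hf : AEMeasurable f μ) (hh : AEMeasurable h μ) :
    W2sq (μ.map f) (μ.map h) ≤ ∫ ω, (f ω - h ω) ^ 2 ∂μ := by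
  have hfh : AEMeasurable (fun ω => (f ω, h ω)) μ := hf.prodMk hh
  refine csInf_le ⟨0, ?_⟩ ⟨μ.map fun ω => (f ω, h ω), ?_, ?_, ?_⟩
  · rintro c ⟨γ, -, -, rfl⟩
    exact integral_nonneg fun z => sq_nonneg _
  · exact AEMeasurable.map_map_of_aemeasurable measurable_fst.aemeasurable hfh
  · exact AEMeasurable.map_map_of_aemeasurable measurable_snd.aemeasurable hfh
  · exact (integral_map hfh ((continuous_fst.sub continuous_snd).pow 2).aestronglyMeasurable).symm

theorem sq_sub_le_of_abs_le_of_lipschitz {E ι : Type*} [PseudoMetricSpace E] [DecidableEq ι]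
    {g : E × ι → ℝ} {M L : ℝ} (hM : ∀ x s, |g (x, s)| ≤ M)
    (hLip : ∀ s x x', |g (x', s) - g (x, s)| ≤ L * dist x' x) (y : ℝ) (x x' : E) (s s' : ι) :
    (y - g (x', s')) ^ 2 ≤ 2 * (y - g (x, s)) ^ 2 + 2 * L ^ 2 * dist x x' ^ 2
      + if s ≠ s' then 8 * M ^ 2 else 0 := by
  have htriangle := add_sq_le (a := y - g (x, s)) (b := g (x, s) - g (x', s'))
  by_cases hs : s = s'
  · subst hs
    have hlip := pow_le_pow_left₀ (abs_nonneg _) (hLip s x' x) 2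
    simp only [sq_abs, mul_pow, ne_eq, not_true_eq_false, if_false] at hlip ⊢
    nlinarith
  · have hx := abs_le.mp (hM x s)
    have hx' := abs_le.mp (hM x' s')
    simp only [ne_eq, hs, not_false_eq_true, if_true]
    nlinarith [sq_nonneg (L * dist x x')]

theorem wasserstein_perturbation_inequality_general
    {Ω : Type*} [MeasurableSpace Ω] (Pr : Measure Ω) [IsProbabilityMeasure Pr]
    (d k : ℕ)
    (X X' : Ω → EuclideanSpace ℝ (Fin d)) (S S' : Ω → Fin k)
    (hX : Measurable X) (hX' : Measurable X') (hS : Measurable S) (hS' : Measurable S')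
    (hXX' : MemLp (fun ω => X ω - X' ω) 2 Pr)
    (η ηhat : EuclideanSpace ℝ (Fin d) × Fin k → ℝ)
    (hη : Measurable η) (hηhat : Measurable ηhat)
    (hη2 : MemLp (fun ω => η (X ω, S ω)) 2 Pr)
    (M : ℝ) (hM : ∀ x s, |ηhat (x, s)| ≤ M)
    (L : ℝ)
    (hLip : ∀ (s : Fin k) (x x' : EuclideanSpace ℝ (Fin d)),
      |ηhat (x', s) - ηhat (x, s)| ≤ L * ‖x' - x‖) :
    W2sq (Pr.map (fun ω => η (X ω, S ω))) (Pr.map (fun ω => ηhat (X' ω, S' ω)))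
      ≤ 2 * (∫ ω, (η (X ω, S ω) - ηhat (X ω, S ω)) ^ 2 ∂Pr)
        + 2 * L ^ 2 * (∫ ω, ‖X ω - X' ω‖ ^ 2 ∂Pr)
        + 8 * M ^ 2 * (Pr {ω | S ω ≠ S' ω}).toReal := by
  set f := fun ω => η (X ω, S ω)
  set g := fun ω => ηhat (X ω, S ω)
  set h := fun ω => ηhat (X' ω, S' ω)
  set D := {ω | S ω ≠ S' ω}
  have hD : MeasurableSet D := (measurableSet_eq_fun hS hS').compl
  have hg2 : MemLp g 2 Pr :=
    .of_bound (hηhat.comp (hX.prodMk hS)).aestronglyMeasurable M (ae_of_all _ fun ω => hM _ _)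
  have hpointwise : ∀ ω, (f ω - h ω) ^ 2 ≤ 2 * (f ω - g ω) ^ 2
      + 2 * L ^ 2 * ‖X ω - X' ω‖ ^ 2 + D.indicator (fun _ => 8 * M ^ 2) ω := fun ω => by
    simpa [Set.indicator_apply, D, dist_eq_norm] using sq_sub_le_of_abs_le_of_lipschitz hM
      (fun s x x' => by simpa [dist_eq_norm] using hLip s x x') (f ω) (X ω) (X' ω) (S ω) (S' ω)
  have hfg : Integrable (fun ω => 2 * (f ω - g ω) ^ 2) Pr :=
    (hη2.sub hg2).integrable_sq.const_mul 2
  have hXX : Integrable (fun ω => 2 * L ^ 2 * ‖X ω - X' ω‖ ^ 2) Pr :=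
    hXX'.norm.integrable_sq.const_mul (2 * L ^ 2)
  have hfgXX : Integrable (fun ω => 2 * (f ω - g ω) ^ 2 + 2 * L ^ 2 * ‖X ω - X' ω‖ ^ 2) Pr :=
    hfg.add hXX
  have hDi := (integrable_const (μ := Pr) (8 * M ^ 2)).indicator hD
  calc _ ≤ ∫ ω, (f ω - h ω) ^ 2 ∂Pr :=
        W2sq_map_le_integral_sq_sub (hη.comp (hX.prodMk hS)).aemeasurable
          (hηhat.comp (hX'.prodMk hS')).aemeasurable
    _ ≤ ∫ ω, 2 * (f ω - g ω) ^ 2 + 2 * L ^ 2 * ‖X ω - X' ω‖ ^ 2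
          + D.indicator (fun _ => 8 * M ^ 2) ω ∂Pr :=
        integral_mono_of_nonneg (ae_of_all _ fun _ => sq_nonneg _) (hfgXX.add hDi)
          (ae_of_all _ hpointwise)
    _ = _ := by
      rw [integral_add hfgXX hDi, integral_add hfg hXX, integral_const_mul,
        integral_const_mul, integral_indicator_const _ hD, smul_eq_mul, measureReal_def]
      ring

/-- **Perturbation inequality** (key step in the proof of Theorem 3). If `η̂` is bounded
by `M` and `L`-Lipschitz in `x` for every `s`, then
`W₂²(law η(X,S), law η̂(X',S')) ≤ 2 𝔼|η(X,S) − η̂(X,S)|² + 2 L² 𝔼|X − X'|² + 8 M² ℙ(S ≠ S')`. -/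
theorem wasserstein_perturbation_inequality
    {Ω : Type*} [MeasurableSpace Ω] (Pr : Measure Ω) [IsProbabilityMeasure Pr]
    (d k : ℕ) (hk : 0 < k)
    (X X' : Ω → EuclideanSpace ℝ (Fin d)) (S S' : Ω → Fin k)
    (hX : Measurable X) (hX' : Measurable X') (hS : Measurable S) (hS' : Measurable S')
    (hXX' : MemLp (fun ω => X ω - X' ω) 2 Pr)
    (η ηhat : EuclideanSpace ℝ (Fin d) × Fin k → ℝ)
    (hη : Measurable η) (hηhat : Measurable ηhat)
    (hη2 : MemLp (fun ω => η (X ω, S ω)) 2 Pr)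
    (M : ℝ) (hM : ∀ x s, |ηhat (x, s)| ≤ M)
    (L : ℝ) (hL : 0 ≤ L)
    (hLip : ∀ (s : Fin k) (x x' : EuclideanSpace ℝ (Fin d)),
      |ηhat (x', s) - ηhat (x, s)| ≤ L * ‖x' - x‖) :
    W2sq (Pr.map (fun ω => η (X ω, S ω))) (Pr.map (fun ω => ηhat (X' ω, S' ω)))
      ≤ 2 * (∫ ω, (η (X ω, S ω) - ηhat (X ω, S ω)) ^ 2 ∂Pr)
        + 2 * L ^ 2 * (∫ ω, ‖X ω - X' ω‖ ^ 2 ∂Pr)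
        + 8 * M ^ 2 * (Pr {ω | S ω ≠ S' ω}).toReal :=
  wasserstein_perturbation_inequality_general Pr d k X X' S S' hX hX' hS hS' hXX' η ηhat hη hηhat
    hη2 M hM L hLip
end
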